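/- Assume q is odd. For y = (y_0, ..., y_6) ∈ F^7, let R(y) be the 7×7 matrix over F with rows (0, y_2, −2y_0, −2y_4, 0, y_3, 0), (−y_2, 0, 2y_1, 2y_5, −y_3, 0, 0), (2y_0, −2y_1, 0, 0, 2y_4, −2y_5, 0), (2y_4, −2y_5, 0, 0, 0, 0, 0), (0, y_3, −2y_4, 0, 0, 0, 0), (−y_3, 0, 2y_5, 0, 0, 0, 0), (0,0,0,0,0,0,0). Then: R(y) has rank 0 if and only if y_0 = y_1 = y_2 = y_3 = y_4 = y_5 = 0; R(y) has rank 2 if and only if y_3 = y_4 = y_5 = 0 and at least one of y_0, y_1, y_2 is nonzero; in all other cases R(y) has rank 4. -/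

import Mathlib

/-!
The rank of `R(y)` is squeezed between a nonzero minor and the kernel: a nonzero `k × k` minor
gives `k ≤ rank`, and `7 - k` kernel vectors with a nonzero maximal minor give `rank ≤ k`.
If `(y₃, y₄, y₅) ≠ 0`, the kernel contains `(2y₅, 2y₄, y₃, y₂, 2y₁, 2y₀, 0)`,
`(0, 0, 0, y₃, 2y₅, 2y₄, 0)` and `e₆`, and a principal `4 × 4` minor equals `y₃⁴`, `(2y₄)⁴` or
`(2y₅)⁴`. If `y₃ = y₄ = y₅ = 0`, the kernel contains `(2y₁, 2y₀, y₂, 0, 0, 0, 0)` and `e₃, …, e₆`,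
and a principal `2 × 2` minor equals `(2y₀)²`, `(2y₁)²` or `y₂²`. Since `q` is odd, `2 ≠ 0` in `F`.
-/

open Matrix

theorem Matrix.le_rank_of_det_submatrix_ne_zero {m n F : Type*} [Fintype n] [Field F] {k : ℕ}
    (A : Matrix m n F) (r : Fin k → m) (c : Fin k → n) (h : (A.submatrix r c).det ≠ 0) :
    k ≤ A.rank := by
  have hunit : IsUnit (A.submatrix r c) := (isUnit_iff_isUnit_det _).mpr h.isUnit
  simpa [rank_of_isUnit _ hunit] using A.rank_submatrix_le r c

theorem Matrix.rank_eq_of_det_submatrix_ne_zero_of_mul_eq_zero {n F : Type*} [Fintype n] [Field F]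
    {k l : ℕ} {A : Matrix n n F} (B : Matrix n (Fin l) F) (hkl : k + l = Fintype.card n)
    (r c : Fin k → n) (hA : (A.submatrix r c).det ≠ 0)
    (rB : Fin l → n) (hB : (B.submatrix rB id).det ≠ 0) (hAB : A * B = 0) : A.rank = k := by
  have := A.le_rank_of_det_submatrix_ne_zero r c hA
  have := B.le_rank_of_det_submatrix_ne_zero rB id hB
  have := rank_add_rank_le_card_of_mul_eq_zero hAB
  omega

theorem FiniteField.two_ne_zero_of_odd_card {F : Type*} [Field F] [Fintype F]
    (h : Odd (Fintype.card F)) : (2 : F) ≠ 0 := by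
  refine Ring.two_ne_zero fun hchar => ?_
  have := FiniteField.even_card_of_char_two hchar
  rw [Nat.odd_iff] at h
  omega

section CommutatorMatrix

variable {F : Type*} [Field F] (y₀ y₁ y₂ y₃ y₄ y₅ : F)

def commutatorMatrix : Matrix (Fin 7) (Fin 7) F :=
  !![0, y₂, -2 * y₀, -2 * y₄, 0, y₃, 0;
     -y₂, 0, 2 * y₁, 2 * y₅, -y₃, 0, 0;
     2 * y₀, -2 * y₁, 0, 0, 2 * y₄, -2 * y₅, 0;
     2 * y₄, -2 * y₅, 0, 0, 0, 0, 0;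
     0, y₃, -2 * y₄, 0, 0, 0, 0;
     -y₃, 0, 2 * y₅, 0, 0, 0, 0;
     0, 0, 0, 0, 0, 0, 0]

theorem commutatorMatrix_zero : commutatorMatrix (0 : F) 0 0 0 0 0 = 0 := by
  ext i j
  fin_cases i <;> fin_cases j <;> simp [commutatorMatrix]

theorem commutatorMatrix_mul_kernel :
    commutatorMatrix y₀ y₁ y₂ y₃ y₄ y₅ *
      !![2 * y₅, 0, 0; 2 * y₄, 0, 0; y₃, 0, 0; y₂, y₃, 0; 2 * y₁, 2 * y₅, 0; 2 * y₀, 2 * y₄, 0;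
        0, 0, 1] = 0 := by
  ext i j
  fin_cases i <;> fin_cases j <;> simp [commutatorMatrix, mul_apply, Fin.sum_univ_succ] <;> ring

theorem commutatorMatrix_mul_kernel_of_center_eq_zero :
    commutatorMatrix y₀ y₁ y₂ 0 0 0 *
      !![2 * y₁, 0, 0, 0, 0; 2 * y₀, 0, 0, 0, 0; y₂, 0, 0, 0, 0; 0, 1, 0, 0, 0; 0, 0, 1, 0, 0;
        0, 0, 0, 1, 0; 0, 0, 0, 0, 1] = 0 := by
  ext i j
  fin_cases i <;> fin_cases j <;> simp [commutatorMatrix, mul_apply, Fin.sum_univ_succ] <;> ring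

variable {y₀ y₁ y₂ y₃ y₄ y₅}

theorem rank_commutatorMatrix_of_center_eq_zero (h2 : (2 : F) ≠ 0)
    (h : y₀ ≠ 0 ∨ y₁ ≠ 0 ∨ y₂ ≠ 0) : (commutatorMatrix y₀ y₁ y₂ 0 0 0).rank = 2 := by
  have hker := commutatorMatrix_mul_kernel_of_center_eq_zero y₀ y₁ y₂
  rcases h with h | h | h
  · refine rank_eq_of_det_submatrix_ne_zero_of_mul_eq_zero _ rfl ![0, 2] ![0, 2] ?_
      ![1, 3, 4, 5, 6] ?_ hker
    -- Expanding the determinant before `simp` sees the submatrix keeps its entries computable.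
    all_goals
      unfold submatrix; rw [det_succ_row_zero]
      simp [Fin.sum_univ_succ, det_succ_row_zero, Fin.succAbove, commutatorMatrix, h, h2]
  · refine rank_eq_of_det_submatrix_ne_zero_of_mul_eq_zero _ rfl ![1, 2] ![1, 2] ?_
      ![0, 3, 4, 5, 6] ?_ hker
    all_goals
      unfold submatrix; rw [det_succ_row_zero]
      simp [Fin.sum_univ_succ, det_succ_row_zero, Fin.succAbove, commutatorMatrix, h, h2]
  · refine rank_eq_of_det_submatrix_ne_zero_of_mul_eq_zero _ rfl ![0, 1] ![0, 1] ?_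
      ![2, 3, 4, 5, 6] ?_ hker
    all_goals
      unfold submatrix; rw [det_succ_row_zero]
      simp [Fin.sum_univ_succ, det_succ_row_zero, Fin.succAbove, commutatorMatrix, h]

theorem rank_commutatorMatrix_of_center_ne_zero (h2 : (2 : F) ≠ 0)
    (h : y₃ ≠ 0 ∨ y₄ ≠ 0 ∨ y₅ ≠ 0) : (commutatorMatrix y₀ y₁ y₂ y₃ y₄ y₅).rank = 4 := by
  have hker := commutatorMatrix_mul_kernel y₀ y₁ y₂ y₃ y₄ y₅
  rcases h with h | h | h
  · refine rank_eq_of_det_submatrix_ne_zero_of_mul_eq_zero _ rfl ![0, 1, 4, 5] ![0, 1, 4, 5] ?_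
      ![2, 3, 6] ?_ hker
    all_goals
      unfold submatrix; rw [det_succ_row_zero]
      simp [Fin.sum_univ_succ, det_succ_row_zero, Fin.succAbove, commutatorMatrix, h]
  · refine rank_eq_of_det_submatrix_ne_zero_of_mul_eq_zero _ rfl ![0, 2, 3, 4] ![0, 2, 3, 4] ?_
      ![1, 5, 6] ?_ hker
    all_goals
      unfold submatrix; rw [det_succ_row_zero]
      simp [Fin.sum_univ_succ, det_succ_row_zero, Fin.succAbove, commutatorMatrix, h, h2]
  · refine rank_eq_of_det_submatrix_ne_zero_of_mul_eq_zero _ rfl ![1, 2, 3, 5] ![1, 2, 3, 5] ?_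
      ![0, 4, 6] ?_ hker
    all_goals
      unfold submatrix; rw [det_succ_row_zero]
      simp [Fin.sum_univ_succ, det_succ_row_zero, Fin.succAbove, commutatorMatrix, h, h2]

open Classical in
theorem rank_commutatorMatrix (h2 : (2 : F) ≠ 0) :
    (commutatorMatrix y₀ y₁ y₂ y₃ y₄ y₅).rank =
      if y₃ = 0 ∧ y₄ = 0 ∧ y₅ = 0 then
        if y₀ = 0 ∧ y₁ = 0 ∧ y₂ = 0 then 0 else 2
      else 4 := by
  split_ifs with hcenter hrest
  · obtain ⟨rfl, rfl, rfl⟩ := hcenter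
    obtain ⟨rfl, rfl, rfl⟩ := hrest
    rw [commutatorMatrix_zero, rank_zero]
  · obtain ⟨rfl, rfl, rfl⟩ := hcenter
    exact rank_commutatorMatrix_of_center_eq_zero h2 (by tauto)
  · exact rank_commutatorMatrix_of_center_ne_zero h2 (by tauto)

end CommutatorMatrix

theorem stmt_14_general (F : Type*) [Field F] [Fintype F] (q : ℕ) (hq : Fintype.card F = q)
    (hodd : Odd q) (y₀ y₁ y₂ y₃ y₄ y₅ : F) :
    let R : Matrix (Fin 7) (Fin 7) F :=
      !![0, y₂, -2 * y₀, -2 * y₄, 0, y₃, 0;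
         -y₂, 0, 2 * y₁, 2 * y₅, -y₃, 0, 0;
         2 * y₀, -2 * y₁, 0, 0, 2 * y₄, -2 * y₅, 0;
         2 * y₄, -2 * y₅, 0, 0, 0, 0, 0;
         0, y₃, -2 * y₄, 0, 0, 0, 0;
         -y₃, 0, 2 * y₅, 0, 0, 0, 0;
         0, 0, 0, 0, 0, 0, 0]
    (R.rank = 0 ↔ (y₀ = 0 ∧ y₁ = 0 ∧ y₂ = 0 ∧ y₃ = 0 ∧ y₄ = 0 ∧ y₅ = 0)) ∧
    (R.rank = 2 ↔ ((y₃ = 0 ∧ y₄ = 0 ∧ y₅ = 0) ∧ (y₀ ≠ 0 ∨ y₁ ≠ 0 ∨ y₂ ≠ 0))) ∧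
    ((¬ (y₀ = 0 ∧ y₁ = 0 ∧ y₂ = 0 ∧ y₃ = 0 ∧ y₄ = 0 ∧ y₅ = 0) ∧
      ¬ ((y₃ = 0 ∧ y₄ = 0 ∧ y₅ = 0) ∧ (y₀ ≠ 0 ∨ y₁ ≠ 0 ∨ y₂ ≠ 0))) → R.rank = 4) := by
  intro R
  have h2 : (2 : F) ≠ 0 := FiniteField.two_ne_zero_of_odd_card (hq ▸ hodd)
  have hR : R.rank = (commutatorMatrix y₀ y₁ y₂ y₃ y₄ y₅).rank := rfl
  rw [hR, rank_commutatorMatrix h2]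
  split_ifs <;> grind

/-- Assume `q` is odd.  For `y ∈ F⁷`, the commutator matrix `R(y)` has rank `0`
iff `y₀ = ⋯ = y₅ = 0`; rank `2` iff `y₃ = y₄ = y₅ = 0` and at least one of `y₀, y₁, y₂` is
nonzero; and in all other cases rank `4`. -/
theorem stmt_14 (F : Type*) [Field F] [Fintype F] (q : ℕ) (hq : Fintype.card F = q)
    (hodd : Odd q) (y₀ y₁ y₂ y₃ y₄ y₅ y₆ : F) :
    let R : Matrix (Fin 7) (Fin 7) F :=
      !![0, y₂, -2 * y₀, -2 * y₄, 0, y₃, 0;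
         -y₂, 0, 2 * y₁, 2 * y₅, -y₃, 0, 0;
         2 * y₀, -2 * y₁, 0, 0, 2 * y₄, -2 * y₅, 0;
         2 * y₄, -2 * y₅, 0, 0, 0, 0, 0;
         0, y₃, -2 * y₄, 0, 0, 0, 0;
         -y₃, 0, 2 * y₅, 0, 0, 0, 0;
         0, 0, 0, 0, 0, 0, 0]
    (R.rank = 0 ↔ (y₀ = 0 ∧ y₁ = 0 ∧ y₂ = 0 ∧ y₃ = 0 ∧ y₄ = 0 ∧ y₅ = 0)) ∧
    (R.rank = 2 ↔ ((y₃ = 0 ∧ y₄ = 0 ∧ y₅ = 0) ∧ (y₀ ≠ 0 ∨ y₁ ≠ 0 ∨ y₂ ≠ 0))) ∧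
    ((¬ (y₀ = 0 ∧ y₁ = 0 ∧ y₂ = 0 ∧ y₃ = 0 ∧ y₄ = 0 ∧ y₅ = 0) ∧
      ¬ ((y₃ = 0 ∧ y₄ = 0 ∧ y₅ = 0) ∧ (y₀ ≠ 0 ∨ y₁ ≠ 0 ∨ y₂ ≠ 0))) → R.rank = 4) :=
  stmt_14_general F q hq hodd y₀ y₁ y₂ y₃ y₄ y₅
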